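/- arXiv:math/0410465 — 3 statements merged into one kernel-verified Lean document; each statement's English description precedes it below -/
import Mathlib

section
/- If x and y are stable closed sites and the configuration contains a closed nearest-neighbor path in Z^2 joining x and y, then every site of that path is stable. -/
open MeasureTheory Filter Set

/-- Sites of the lattice `ℤ²`. -/
abbrev Site : Type := ℤ × ℤ

/-- A configuration of open (`true`, i.e. `1`) and closed (`false`, i.e. `0`) sites. -/
abbrev Config : Type := Site → Bool

/-- Nearest-neighbour adjacency in `ℤ²`. -/
def adj (x y : Site) : Prop := (x.1 - y.1).natAbs + (x.2 - y.2).natAbs = 1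

/-- `*`-adjacency: adjacency in the close-packed lattice `ℤ²_cp`. -/
def adjStar (x y : Site) : Prop :=
  x ≠ y ∧ (x.1 - y.1).natAbs ≤ 1 ∧ (x.2 - y.2).natAbs ≤ 1

/-- The four nearest neighbours of a site. -/
def nbrs (x : Site) : Finset Site :=
  {(x.1 + 1, x.2), (x.1 - 1, x.2), (x.1, x.2 + 1), (x.1, x.2 - 1)}

/-- One step of the bootstrap dynamics: a closed site with at least three open
nearest neighbours becomes open; open sites are stable. -/
def step (ω : Config) : Config := fun x =>
  ω x || decide (3 ≤ ((nbrs x).filter fun y => ω y = true).card)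

/-- The configuration after `n` updates (`evolve ω 0 = ω`). -/
def evolve (ω : Config) : ℕ → Config
  | 0 => ω
  | n + 1 => step (evolve ω n)

/-- The site `x` is open in the final (limiting) configuration `ω̄`. -/
def finalOpen (ω : Config) (x : Site) : Prop := ∃ n, evolve ω n x = true

/-- A closed site `x` is stable iff it stays closed at all times, i.e. it is
closed in the final configuration `ω̄`. -/
def stableClosed (ω : Config) (x : Site) : Prop := ∀ n, evolve ω n x = false

/-- A self-avoiding path (with respect to an adjacency relation `A`) all of whose
sites lie in the set `S`. -/
def IsPathIn (S : Set Site) (A : Site → Site → Prop) (k : ℕ) (π : Fin (k + 1) → Site) : Prop :=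
  Function.Injective π ∧ (∀ i : Fin k, A (π i.castSucc) (π i.succ)) ∧ ∀ i, π i ∈ S

/-- `x` and `y` are joined by a path in `S` for the adjacency relation `A`. -/
def ConnIn (S : Set Site) (A : Site → Site → Prop) (x y : Site) : Prop :=
  ∃ (k : ℕ) (π : Fin (k + 1) → Site),
    π 0 = x ∧ π (Fin.last k) = y ∧ IsPathIn S A k π

/-- The plaquette (unit square of four sites) with lower-left corner `c`. -/
def plaq (c : Site) : Finset Site :=
  {c, (c.1 + 1, c.2), (c.1, c.2 + 1), (c.1 + 1, c.2 + 1)}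

/-- A site is protected if it is closed and belongs to a plaquette of closed sites. -/
def IsProtected (ω : Config) (x : Site) : Prop :=
  ω x = false ∧ ∃ c : Site, x ∈ plaq c ∧ ∀ y ∈ plaq c, ω y = false

/-- The partial cluster `C_{(x,x')}`: sites reachable from `x'` by a self-avoiding
`ℤ²`-path whose first step avoids `x` and whose sites all have the state of `x'`. -/
def partialCluster (ω : Config) (x x' : Site) : Set Site :=
  {y | ∃ (k : ℕ) (π : Fin (k + 1) → Site),
    π 0 = x' ∧ π (Fin.last k) = y ∧ Function.Injective π ∧
    (∀ i : Fin k, adj (π i.castSucc) (π i.succ)) ∧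
    (∀ i, ω (π i) = ω x') ∧ ∀ i : Fin (k + 1), (i : ℕ) = 1 → π i ≠ x}


lemma adj_symm' {x y : Site} (h : adj x y) : adj y x := by
  unfold adj at *; omega

lemma adj_mem_nbrs {x y : Site} (h : adj x y) : y ∈ nbrs x := by
  simp only [nbrs, Finset.mem_insert, Finset.mem_singleton, Prod.ext_iff]
  unfold adj at h
  omega

lemma nbrs_card_le (x : Site) : (nbrs x).card ≤ 4 := by
  simp only [nbrs]
  refine le_trans (Finset.card_insert_le _ _) (Nat.succ_le_succ ?_)
  refine le_trans (Finset.card_insert_le _ _) (Nat.succ_le_succ ?_)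
  refine le_trans (Finset.card_insert_le _ _) (Nat.succ_le_succ ?_)
  simp

/-- If `x` and `y` are stable closed sites joined by a closed `ℤ²`-path,
then every site of the path is stable. -/
theorem path_between_stable_sites_is_stable (ω : Config) (k : ℕ)
    (π : Fin (k + 1) → Site)
    (hpath : IsPathIn {z | ω z = false} adj k π)
    (h0 : stableClosed ω (π 0))
    (hk : stableClosed ω (π (Fin.last k))) :
    ∀ i, stableClosed ω (π i) := by
  obtain ⟨hinj, hadj, hmem⟩ := hpath
  intro i n
  induction n generalizing i with
  | zero => exact hmem i
  | succ n ih =>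
    by_cases hi0 : i = 0
    · subst hi0; exact h0 (n + 1)
    by_cases hik : i = Fin.last k
    · subst hik; exact hk (n + 1)
    have h1 : 0 < (i : ℕ) := by
      rcases Nat.eq_zero_or_pos (i : ℕ) with h | h
      · exact absurd (Fin.ext h) hi0
      · exact h
    have h2 : (i : ℕ) < k := by
      have hlt := i.isLt
      have : (i : ℕ) ≠ k := fun h => hik (Fin.ext h)
      omega
    set ω' := evolve ω n with hω'
    set j1 : Fin k := ⟨(i : ℕ) - 1, by omega⟩ with hj1
    set j2 : Fin k := ⟨(i : ℕ), h2⟩ with hj2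
    have e1 : j1.succ = i := by
      apply Fin.ext; simp [hj1, Fin.val_succ]; omega
    have e2 : j2.castSucc = i := by
      apply Fin.ext; simp [hj2]
    have hA1 : adj (π j1.castSucc) (π i) := by rw [← e1]; exact hadj j1
    have hA2 : adj (π i) (π j2.succ) := by rw [← e2]; exact hadj j2
    set a := π j1.castSucc with ha
    set b := π j2.succ with hb
    have hab : a ≠ b := by
      intro h
      have := hinj h
      have hv := congrArg Fin.val this
      simp only [Fin.val_succ, Fin.coe_castSucc, hj1, hj2] at hv
      omega
    have ha_mem : a ∈ nbrs (π i) := adj_mem_nbrs (adj_symm' hA1)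
    have hb_mem : b ∈ nbrs (π i) := adj_mem_nbrs hA2
    have ha_closed : ω' a = false := ih j1.castSucc
    have hb_closed : ω' b = false := ih j2.succ
    show step ω' (π i) = false
    simp only [step, Bool.or_eq_false_iff, decide_eq_false_iff_not, not_le]
    refine ⟨ih i, ?_⟩
    have hsub : (nbrs (π i)).filter (fun y => ω' y = true) ⊆
        ((nbrs (π i)).erase a).erase b := by
      intro z hz
      rw [Finset.mem_filter] at hz
      rw [Finset.mem_erase, Finset.mem_erase]
      refine ⟨?_, ?_, hz.1⟩
      · rintro rfl; rw [hb_closed] at hz; exact absurd hz.2 (by simp)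
      · rintro rfl; rw [ha_closed] at hz; exact absurd hz.2 (by simp)
    have hle := Finset.card_le_card hsub
    have hc : (((nbrs (π i)).erase a).erase b).card ≤ 2 := by
      rw [Finset.card_erase_of_mem (Finset.mem_erase.mpr ⟨hab.symm, hb_mem⟩),
        Finset.card_erase_of_mem ha_mem]
      have := nbrs_card_le (π i)
      omega
    omega
end

section
/- For each p in (0,1) there exist alpha > 0 and K < infinity such that for any fixed ordered pair (x,x') of nearest neighbors in Z^2, the P_p-probability that the partial cluster C_{(x,x')} has at least n sites and contains no protected site is at most K exp(-alpha n). In fact one may take the bound K [1-(1-p)^4]^{n/4}. -/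
/-!
Partition `ℤ²` into the plaquettes with even lower-left corner and explore the partial cluster
one plaquette at a time: starting from the plaquettes of `x` and `x'`, pick a site outside the
explored region adjacent to a site reached from `x'` inside it, and reveal its whole plaquette.
If the picked site is closed it belongs to the cluster, so when the cluster has no protected
site the revealed plaquette contains an open site. The explored region is determined by the
states inside it and the new plaquette is disjoint from it, so given the past this has
probability `1 - (1 - p)⁴`. After `j` steps at most `8 + 4j` sites are explored, so a cluster of
`n` sites forces about `n / 4` steps.
-/

open MeasureTheory Filter Set

/-- `μ` is the Bernoulli product measure with density `p` of open sites:
all finite-dimensional marginals are products of Bernoulli(`p`) laws. -/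
def IsBernoulli (p : ℝ) (μ : Measure Config) : Prop :=
  ∀ (s : Finset Site) (η : Site → Bool),
    μ {ω : Config | ∀ x ∈ s, ω x = η x} =
      ∏ x ∈ s, ENNReal.ofReal (if η x then p else 1 - p)

section Blocks

def blockCorner (z : Site) : Site := (z.1 - z.1 % 2, z.2 - z.2 % 2)

def block (z : Site) : Finset Site := plaq (blockCorner z)

lemma mem_plaq_iff {c w : Site} :
    w ∈ plaq c ↔ (w.1 = c.1 ∨ w.1 = c.1 + 1) ∧ (w.2 = c.2 ∨ w.2 = c.2 + 1) := by
  simp only [plaq, Finset.mem_insert, Finset.mem_singleton, Prod.ext_iff]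
  omega

lemma mem_block_self (z : Site) : z ∈ block z := by
  rw [block, mem_plaq_iff, blockCorner]
  omega

lemma block_eq_of_mem {z w : Site} (h : w ∈ block z) : block w = block z := by
  rw [block, mem_plaq_iff, blockCorner] at h
  have h1 : w.1 - w.1 % 2 = z.1 - z.1 % 2 := by omega
  have h2 : w.2 - w.2 % 2 = z.2 - z.2 % 2 := by omega
  simp only [block, blockCorner, h1, h2]

lemma card_block (z : Site) : (block z).card = 4 := by
  rw [block, plaq, Finset.card_insert_of_notMem, Finset.card_insert_of_notMem,
    Finset.card_insert_of_notMem, Finset.card_singleton] <;> simp [Prod.ext_iff]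

lemma disjoint_block_of_notMem {R : Finset Site} (hR : ∀ z ∈ R, block z ⊆ R) {z : Site}
    (hz : z ∉ R) : Disjoint R (block z) :=
  Finset.disjoint_right.mpr fun w hwz hwR =>
    hz ((block_eq_of_mem hwz ▸ hR w hwR : block z ⊆ R) (mem_block_self z))

end Blocks

section Cylinders

variable {p : ℝ} {μ : Measure Config}

def cyl (s : Finset Site) (η : Config) : Set Config := {ω | ∀ x ∈ s, ω x = η x}

lemma measurableSet_cyl (s : Finset Site) (η : Config) : MeasurableSet (cyl s η) := by
  have : cyl s η = ⋂ z ∈ s, (fun ω : Config => ω z) ⁻¹' {η z} := by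
    ext ω
    simp [cyl]
  rw [this]
  exact Finset.measurableSet_biInter s fun z _ => measurable_pi_apply z (measurableSet_singleton _)

open Classical in
lemma cyl_union_closed {R Q : Finset Site} (hRQ : Disjoint R Q) (η : Config) :
    cyl (R ∪ Q) (Q.piecewise (fun _ => false) η) = cyl R η ∩ {ω | ∀ w ∈ Q, ω w = false} := by
  ext ω
  simp only [cyl, Set.mem_inter_iff, Set.mem_ofPred, Finset.mem_union, or_imp, forall_and]
  refine and_congr (forall₂_congr fun z hz => ?_) (forall₂_congr fun w hw => ?_)
  · rw [Finset.piecewise_eq_of_notMem _ _ _ (Finset.disjoint_left.mp hRQ hz)]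
  · rw [Finset.piecewise_eq_of_mem _ _ _ hw]

open Classical in
lemma measure_cyl_inter_exists_open [IsFiniteMeasure μ] (hp : p ≤ 1) (hμ : IsBernoulli p μ)
    {R Q : Finset Site} (hRQ : Disjoint R Q) (η : Config) :
    μ (cyl R η ∩ {ω | ∃ w ∈ Q, ω w = true}) =
      ENNReal.ofReal (1 - (1 - p) ^ Q.card) * μ (cyl R η) := by
  set closedOnQ : Config := Q.piecewise (fun _ => false) η
  have hclosed : cyl (R ∪ Q) closedOnQ = cyl R η ∩ {ω | ∀ w ∈ Q, ω w = false} :=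
    cyl_union_closed hRQ η
  have hsplit : cyl R η ∩ {ω | ∃ w ∈ Q, ω w = true} = cyl R η \ cyl (R ∪ Q) closedOnQ := by
    ext ω
    simp [hclosed]
  have hmeasure : μ (cyl (R ∪ Q) closedOnQ) = μ (cyl R η) * ENNReal.ofReal ((1 - p) ^ Q.card) := by
    rw [cyl, hμ, cyl, hμ, Finset.prod_union hRQ]
    congr 1
    · exact Finset.prod_congr rfl fun z hz => by
        simp only [closedOnQ, Finset.piecewise_eq_of_notMem _ _ _ (Finset.disjoint_left.mp hRQ hz)]
    · rw [ENNReal.ofReal_pow (by linarith), ← Finset.prod_const]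
      exact Finset.prod_congr rfl fun w hw => by
        simp [closedOnQ, Finset.piecewise_eq_of_mem _ _ _ hw]
  have hsub : cyl (R ∪ Q) closedOnQ ⊆ cyl R η := hclosed ▸ Set.inter_subset_left
  rw [hsplit, measure_sdiff hsub (measurableSet_cyl _ _).nullMeasurableSet (measure_ne_top μ _),
    hmeasure, ENNReal.ofReal_sub _ (by positivity), ENNReal.ofReal_one,
    ENNReal.sub_mul fun _ _ => measure_ne_top μ _, one_mul, mul_comm]

end Cylinders

section Determined

variable {p : ℝ} {μ : Measure Config}

def revealed (R : Config → Finset Site) (ω : Config) : Finset Site × Finset Site :=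
  (R ω, (R ω).filter (ω · = true))

lemma inter_revealed_preimage_eq_cyl {A : Set Config} {R : Config → Finset Site}
    (hdet : ∀ ω ∈ A, ∀ ω', (∀ z ∈ R ω, ω' z = ω z) → ω' ∈ A ∧ R ω' = R ω)
    {ω : Config} (hω : ω ∈ A) : A ∩ revealed R ⁻¹' {revealed R ω} = cyl (R ω) ω := by
  ext ω'
  constructor
  · rintro ⟨-, hkey⟩
    obtain ⟨hR, hopen⟩ := Prod.mk.inj hkey
    intro z hz
    have hz' := Finset.ext_iff.mp hopen z
    simp only [Finset.mem_filter, hR, hz, true_and] at hz'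
    exact Bool.eq_iff_iff.mpr hz'
  · intro h
    obtain ⟨hA, hR⟩ := hdet ω hω ω' h
    refine ⟨hA, ?_⟩
    simp only [revealed, Set.mem_preimage, Set.mem_singleton_iff, hR]
    exact congrArg _ (Finset.filter_congr fun z hz => by rw [h z hz])

theorem measure_inter_exists_open_le [IsFiniteMeasure μ] (hp : p ≤ 1) (hμ : IsBernoulli p μ)
    {A : Set Config} {R Q : Config → Finset Site} {m : ℕ}
    (hdet : ∀ ω ∈ A, ∀ ω', (∀ z ∈ R ω, ω' z = ω z) → ω' ∈ A ∧ R ω' = R ω ∧ Q ω' = Q ω)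
    (hdisj : ∀ ω ∈ A, Disjoint (R ω) (Q ω)) (hcard : ∀ ω ∈ A, (Q ω).card = m) :
    μ (A ∩ {ω | ∃ w ∈ Q ω, ω w = true}) ≤ ENNReal.ofReal (1 - (1 - p) ^ m) * μ A := by
  -- `A` splits into countably many atoms, on each of which it is a cylinder over `R ω` and
  -- `Q` is constant, so the cylinder computation applies atom by atom.
  let atom : Finset Site × Finset Site → Set Config := fun i => A ∩ revealed R ⁻¹' {i}
  have hatom : ∀ ω ∈ A, atom (revealed R ω) = cyl (R ω) ω := fun ω hω =>
    inter_revealed_preimage_eq_cyl (fun ω hω ω' h => (hdet ω hω ω' h).imp_right And.left) hω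
  have hmeas : ∀ i, MeasurableSet (atom i) := by
    intro i
    rcases (atom i).eq_empty_or_nonempty with h | ⟨ω, hωA, rfl⟩
    · exact h ▸ MeasurableSet.empty
    · exact hatom ω hωA ▸ measurableSet_cyl _ _
  have hdisjoint : Pairwise (Function.onFun Disjoint atom) := fun i j hij =>
    Set.disjoint_left.mpr fun ω hi hj => hij (hi.2.symm.trans hj.2)
  have hunion : A = ⋃ i, atom i := by
    ext ω
    simp [atom]
  have hterm : ∀ i, μ (atom i ∩ {ω | ∃ w ∈ Q ω, ω w = true}) ≤
      ENNReal.ofReal (1 - (1 - p) ^ m) * μ (atom i) := by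
    intro i
    rcases (atom i).eq_empty_or_nonempty with h | ⟨ω, hωA, rfl⟩
    · simp [h]
    have hQ : atom (revealed R ω) ∩ {ω' | ∃ w ∈ Q ω', ω' w = true} =
        cyl (R ω) ω ∩ {ω' | ∃ w ∈ Q ω, ω' w = true} := by
      rw [hatom ω hωA]
      ext ω'
      refine and_congr_right fun h => ?_
      rw [Set.mem_ofPred, Set.mem_ofPred, (hdet ω hωA ω' h).2.2]
    rw [hQ, measure_cyl_inter_exists_open hp hμ (hdisj ω hωA), hcard ω hωA, hatom ω hωA]
  calc μ (A ∩ {ω | ∃ w ∈ Q ω, ω w = true})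
      = μ (⋃ i, atom i ∩ {ω | ∃ w ∈ Q ω, ω w = true}) := by rw [← Set.iUnion_inter, ← hunion]
    _ ≤ ∑' i, μ (atom i ∩ {ω | ∃ w ∈ Q ω, ω w = true}) := measure_iUnion_le _
    _ ≤ ∑' i, ENNReal.ofReal (1 - (1 - p) ^ m) * μ (atom i) := ENNReal.tsum_le_tsum hterm
    _ = ENNReal.ofReal (1 - (1 - p) ^ m) * μ A := by
      rw [ENNReal.tsum_mul_left, ← measure_iUnion hdisjoint hmeas, ← hunion]

end Determined

section Paths

lemma IsPathIn.mono {S S' : Set Site} {A : Site → Site → Prop} {k : ℕ} {π : Fin (k + 1) → Site}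
    (h : IsPathIn S A k π) (hS : S ⊆ S') : IsPathIn S' A k π :=
  ⟨h.1, h.2.1, fun i => hS (h.2.2 i)⟩

lemma IsPathIn.castLE {S : Set Site} {A : Site → Site → Prop} {k : ℕ} {π : Fin (k + 1) → Site}
    (h : IsPathIn S A k π) {j : ℕ} (hj : j ≤ k) :
    IsPathIn S A j (π ∘ Fin.castLE (Nat.succ_le_succ hj)) :=
  ⟨h.1.comp (Fin.castLE_injective _), fun i => h.2.1 (Fin.castLE hj i), fun _ => h.2.2 _⟩

lemma IsPathIn.snoc {S : Set Site} {A : Site → Site → Prop} {k : ℕ} {π : Fin (k + 1) → Site}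
    (h : IsPathIn S A k π) {z : Site} (hzS : z ∈ S) (hz : A (π (Fin.last k)) z)
    (hzπ : z ∉ Set.range π) : IsPathIn S A (k + 1) (Fin.snoc π z) := by
  refine ⟨Fin.snoc_injective_iff.mpr ⟨h.1, hzπ⟩, fun i => ?_, fun i => ?_⟩
  · induction i using Fin.lastCases with
    | last => simpa using hz
    | cast i =>
      rw [Fin.succ_castSucc, Fin.snoc_castSucc, Fin.snoc_castSucc]
      exact h.2.1 i
  · induction i using Fin.lastCases with
    | last => simpa using hzS
    | cast i => simpa using h.2.2 i

lemma exists_first_exit {α : Type*} {k : ℕ} (π : Fin (k + 1) → α) {R : Set α} (h0 : π 0 ∈ R)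
    (hk : π (Fin.last k) ∉ R) :
    ∃ j : Fin k, (∀ i : Fin (j + 1), π (Fin.castLE (by omega) i) ∈ R) ∧ π j.succ ∉ R := by
  classical
  have hex : ∃ n, ∃ hn : n < k + 1, π ⟨n, hn⟩ ∉ R := ⟨k, by omega, hk⟩
  obtain ⟨hm, hmR⟩ := Nat.find_spec hex
  have hm0 : Nat.find hex ≠ 0 := fun h => hmR (by convert h0 using 2; exact Fin.ext h)
  refine ⟨⟨Nat.find hex - 1, by omega⟩, fun i => ?_, ?_⟩
  · have hi : (i : ℕ) < Nat.find hex := by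
      have := i.isLt
      simp only [Fin.val_mk] at this
      omega
    by_contra hiR
    exact Nat.find_min hex hi ⟨by omega, hiR⟩
  · convert hmR using 2
    exact congrArg π (Fin.ext (Nat.sub_add_cancel (Nat.one_le_iff_ne_zero.mpr hm0)))

end Paths

section Exploration

variable (x x' : Site)

def reachIn (ω : Config) (R : Set Site) : Set Site :=
  {y | ∃ k π, IsPathIn (R ∩ {z | ω z = false}) adj k π ∧ π 0 = x' ∧ π (Fin.last k) = y ∧
    ∀ i : Fin (k + 1), (i : ℕ) = 1 → π i ≠ x}

lemma partialCluster_eq_reachIn_univ {ω : Config} (hx' : ω x' = false) :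
    partialCluster ω x x' = reachIn x x' ω univ := by
  ext y
  constructor
  · rintro ⟨k, π, h0, hy, hinj, hadj, hcl, hx⟩
    exact ⟨k, π, ⟨hinj, hadj, fun i => ⟨trivial, (hcl i).trans hx'⟩⟩, h0, hy, hx⟩
  · rintro ⟨k, π, ⟨hinj, hadj, hcl⟩, h0, hy, hx⟩
    exact ⟨k, π, h0, hy, hinj, hadj, fun i => (hcl i).2.trans hx'.symm, hx⟩

lemma reachIn_congr {ω ω' : Config} {R : Set Site} (h : ∀ z ∈ R, ω' z = ω z) :
    reachIn x x' ω' R = reachIn x x' ω R := by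
  have hR : R ∩ {z | ω' z = false} = R ∩ {z | ω z = false} :=
    Set.ext fun z => and_congr_right fun hz => by rw [Set.mem_ofPred, Set.mem_ofPred, h z hz]
  simp only [reachIn, hR]

def exits (ω : Config) (R : Set Site) : Set Site :=
  {z | z ∉ R ∧ ∃ y ∈ reachIn x x' ω R, adj y z}

lemma exits_congr {ω ω' : Config} {R : Set Site} (h : ∀ z ∈ R, ω' z = ω z) :
    exits x x' ω' R = exits x x' ω R := by
  simp only [exits, reachIn_congr x x' h]

noncomputable def nextSite (ω : Config) (R : Set Site) : Site :=
  Classical.epsilon (· ∈ exits x x' ω R)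

lemma nextSite_mem_exits {ω : Config} {R : Set Site} (h : (exits x x' ω R).Nonempty) :
    nextSite x x' ω R ∈ exits x x' ω R :=
  Classical.epsilon_spec h

lemma exits_nonempty_of_mem_reachIn_univ {ω : Config} {R : Set Site} (hx'R : x' ∈ R) {y : Site}
    (hy : y ∈ reachIn x x' ω univ) (hyR : y ∉ R) : (exits x x' ω R).Nonempty := by
  obtain ⟨k, π, hπ, h0, rfl, hx⟩ := hy
  obtain ⟨j, hjR, hj⟩ := exists_first_exit π (h0 ▸ hx'R) hyR
  have hprefix := hπ.castLE j.isLt.le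
  refine ⟨π j.succ, hj, π j.castSucc,
    ⟨j, _, ⟨hprefix.1, hprefix.2.1, fun i => ⟨hjR i, (hprefix.2.2 i).2⟩⟩, h0, rfl,
      fun i hi => hx _ hi⟩, hπ.2.1 j⟩

lemma mem_reachIn_univ_of_mem_exits {ω : Config} {R : Set Site} (hxR : x ∈ R) {z : Site}
    (hz : z ∈ exits x x' ω R) (hzc : ω z = false) : z ∈ reachIn x x' ω univ := by
  obtain ⟨hzR, y, ⟨k, π, hπ, h0, rfl, hx⟩, hadj⟩ := hz
  refine ⟨k + 1, Fin.snoc π z, (hπ.mono (Set.inter_subset_inter_left _ (Set.subset_univ R))).snoc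
    ⟨trivial, hzc⟩ hadj ?_, ?_, Fin.snoc_last _ _, fun i hi => ?_⟩
  · rintro ⟨i, rfl⟩
    exact hzR (hπ.2.2 i).1
  · rw [← Fin.castSucc_zero, Fin.snoc_castSucc, h0]
  · induction i using Fin.lastCases with
    | last =>
      rw [Fin.snoc_last]
      rintro rfl
      exact hzR hxR
    | cast i =>
      rw [Fin.snoc_castSucc]
      exact hx i hi

end Exploration

section Explored

variable (x x' : Site)

open Classical in
noncomputable def explored (ω : Config) : ℕ → Finset Site
  | 0 => block x ∪ block x'
  | j + 1 =>
    if (exits x x' ω (explored ω j)).Nonempty then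
      explored ω j ∪ block (nextSite x x' ω (explored ω j))
    else explored ω j

variable {x x'} {ω : Config}

lemma explored_succ_of_nonempty {j : ℕ} (h : (exits x x' ω (explored x x' ω j)).Nonempty) :
    explored x x' ω (j + 1) = explored x x' ω j ∪ block (nextSite x x' ω (explored x x' ω j)) :=
  if_pos h

lemma monotone_explored : Monotone (explored x x' ω) :=
  monotone_nat_of_le_succ fun j => by
    rw [explored]
    split_ifs
    exacts [Finset.subset_union_left, subset_rfl]

lemma block_subset_explored (j : ℕ) : ∀ z ∈ explored x x' ω j, block z ⊆ explored x x' ω j := by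
  induction j with
  | zero =>
    intro z hz
    rcases Finset.mem_union.mp hz with h | h <;> rw [block_eq_of_mem h]
    exacts [Finset.subset_union_left, Finset.subset_union_right]
  | succ j ih =>
    rw [explored]
    split_ifs
    · intro z hz
      rcases Finset.mem_union.mp hz with h | h
      · exact (ih z h).trans Finset.subset_union_left
      · exact block_eq_of_mem h ▸ Finset.subset_union_right
    · exact ih

lemma card_explored_le (j : ℕ) : (explored x x' ω j).card ≤ 8 + 4 * j := by
  induction j with
  | zero => exact (Finset.card_union_le _ _).trans (by rw [card_block, card_block])
  | succ j ih =>
    rw [explored]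
    split_ifs
    · exact (Finset.card_union_le _ _).trans (by rw [card_block]; omega)
    · omega

lemma explored_congr {ω' : Config} (j : ℕ) (h : ∀ z ∈ explored x x' ω j, ω' z = ω z) :
    explored x x' ω' j = explored x x' ω j := by
  induction j with
  | zero => rfl
  | succ j ih =>
    have hj := ih fun z hz => h z (monotone_explored (Nat.le_succ j) hz)
    have hexits : exits x x' ω' (explored x x' ω' j) = exits x x' ω (explored x x' ω j) := by
      rw [hj]
      exact exits_congr x x' fun z hz => h z (monotone_explored (Nat.le_succ j) hz)
    rw [explored, explored, nextSite, nextSite, hexits, hj]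

lemma exits_explored_congr {ω' : Config} (j : ℕ) (h : ∀ z ∈ explored x x' ω j, ω' z = ω z) :
    exits x x' ω' (explored x x' ω' j) = exits x x' ω (explored x x' ω j) := by
  rw [explored_congr j h]
  exact exits_congr x x' h

lemma left_mem_explored (j : ℕ) : x ∈ explored x x' ω j :=
  monotone_explored (Nat.zero_le j) (Finset.mem_union_left _ (mem_block_self x))

lemma right_mem_explored (j : ℕ) : x' ∈ explored x x' ω j :=
  monotone_explored (Nat.zero_le j) (Finset.mem_union_right _ (mem_block_self x'))

variable (x x')

def goodSteps : ℕ → Set Config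
  | 0 => univ
  | j + 1 => {ω | ω ∈ goodSteps j ∧ (exits x x' ω (explored x x' ω j)).Nonempty} ∩
      {ω | ∃ w ∈ block (nextSite x x' ω (explored x x' ω j)), ω w = true}

lemma mem_goodSteps_congr {ω' : Config} (j : ℕ) (hω : ω ∈ goodSteps x x' j)
    (h : ∀ z ∈ explored x x' ω j, ω' z = ω z) : ω' ∈ goodSteps x x' j := by
  induction j with
  | zero => trivial
  | succ j ih =>
    obtain ⟨⟨hωj, hne⟩, w, hw, hwopen⟩ := hω
    have hj : ∀ z ∈ explored x x' ω j, ω' z = ω z :=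
      fun z hz => h z (monotone_explored (Nat.le_succ j) hz)
    have hexits := exits_explored_congr j hj
    have hnext : nextSite x x' ω' (explored x x' ω' j) = nextSite x x' ω (explored x x' ω j) := by
      simp only [nextSite, hexits]
    have hw' : w ∈ explored x x' ω (j + 1) :=
      explored_succ_of_nonempty hne ▸ Finset.mem_union_right _ hw
    exact ⟨⟨ih hωj hj, hexits ▸ hne⟩, w, hnext ▸ hw, (h w hw').trans hwopen⟩

end Explored

section Bounds

variable {p : ℝ} {μ : Measure Config} (x x' : Site)

lemma measure_goodSteps_succ_le [IsFiniteMeasure μ] (hp : p ≤ 1) (hμ : IsBernoulli p μ) (j : ℕ) :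
    μ (goodSteps x x' (j + 1)) ≤ ENNReal.ofReal (1 - (1 - p) ^ 4) * μ (goodSteps x x' j) := by
  refine (measure_inter_exists_open_le hp hμ
    (A := {ω | ω ∈ goodSteps x x' j ∧ (exits x x' ω (explored x x' ω j)).Nonempty})
    (R := fun ω => explored x x' ω j) (Q := fun ω => block (nextSite x x' ω (explored x x' ω j)))
    ?_ ?_ fun ω _ => card_block _).trans (mul_le_mul_right (measure_mono fun ω h => h.1) _)
  · rintro ω ⟨hω, hne⟩ ω' h
    have hexits := exits_explored_congr j h
    exact ⟨⟨mem_goodSteps_congr x x' j hω h, hexits ▸ hne⟩, explored_congr j h,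
      by simp only [nextSite, hexits]⟩
  · rintro ω ⟨-, hne⟩
    exact disjoint_block_of_notMem (block_subset_explored j) (nextSite_mem_exits x x' hne).1

lemma measure_goodSteps_le [IsProbabilityMeasure μ] (hp : p ≤ 1) (hμ : IsBernoulli p μ)
    (j : ℕ) : μ (goodSteps x x' j) ≤ ENNReal.ofReal (1 - (1 - p) ^ 4) ^ j := by
  induction j with
  | zero => exact prob_le_one
  | succ j ih =>
    calc μ (goodSteps x x' (j + 1))
        ≤ ENNReal.ofReal (1 - (1 - p) ^ 4) * μ (goodSteps x x' j) :=
          measure_goodSteps_succ_le x x' hp hμ j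
      _ ≤ ENNReal.ofReal (1 - (1 - p) ^ 4) ^ (j + 1) :=
          (mul_le_mul_right ih _).trans_eq (pow_succ' _ _).symm

variable {x x'} {ω : Config}

lemma exits_nonempty_of_card_lt (hx' : ω x' = false) {s : Finset Site}
    (hs : ↑s ⊆ partialCluster ω x x') {j : ℕ} (hcard : (explored x x' ω j).card < s.card) :
    (exits x x' ω (explored x x' ω j)).Nonempty := by
  obtain ⟨y, hys, hyR⟩ := Finset.exists_mem_notMem_of_card_lt_card hcard
  rw [partialCluster_eq_reachIn_univ x x' hx'] at hs
  exact exits_nonempty_of_mem_reachIn_univ x x' (right_mem_explored j) (hs hys) hyR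

lemma exists_open_mem_block_nextSite (hx' : ω x' = false)
    (hnp : ∀ y ∈ partialCluster ω x x', ¬ IsProtected ω y) {R : Finset Site} (hxR : x ∈ R)
    (hne : (exits x x' ω R).Nonempty) : ∃ w ∈ block (nextSite x x' ω R), ω w = true := by
  by_contra! hclosed
  simp only [ne_eq, Bool.not_eq_true] at hclosed
  have hmem := nextSite_mem_exits x x' hne
  have hcluster := mem_reachIn_univ_of_mem_exits x x' hxR hmem (hclosed _ (mem_block_self _))
  rw [← partialCluster_eq_reachIn_univ x x' hx'] at hcluster
  exact hnp _ hcluster ⟨hclosed _ (mem_block_self _), _, mem_block_self _, hclosed⟩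

lemma noProtected_subset_goodSteps {n j : ℕ} (hj : ∀ i < j, 8 + 4 * i < n) :
    {ω : Config | ω x' = false ∧
        (∃ s : Finset Site, ↑s ⊆ partialCluster ω x x' ∧ n ≤ s.card) ∧
        ∀ y ∈ partialCluster ω x x', ¬ IsProtected ω y} ⊆ goodSteps x x' j := by
  rintro ω ⟨hx', ⟨s, hs, hn⟩, hnp⟩
  induction j with
  | zero => trivial
  | succ j ih =>
    have hne : (exits x x' ω (explored x x' ω j)).Nonempty :=
      exits_nonempty_of_card_lt hx' hs
        ((card_explored_le j).trans_lt ((hj j j.lt_succ_self).trans_le hn))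
    exact ⟨⟨ih fun i hi => hj i (hi.trans j.lt_succ_self), hne⟩,
      exists_open_mem_block_nextSite hx' hnp (left_mem_explored j) hne⟩

end Bounds

/-- For `p ∈ (0,1)` there are `α > 0` and `K < ∞` such that for any ordered pair
`(x,x')` of nearest neighbours, the probability that the partial cluster
`C_{(x,x')}` (a closed cluster) has at least `n` sites and contains no protected
site is at most `K exp(-α n)`; in fact one may take the bound
`K [1-(1-p)⁴]^{n/4}`. -/
theorem partial_cluster_no_protected_exp_decay (p : ℝ) (hp : p ∈ Set.Ioo (0 : ℝ) 1)
    (μ : Measure Config) [IsProbabilityMeasure μ] (hμ : IsBernoulli p μ) :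
    ∃ (α K : ℝ), 0 < α ∧ 0 < K ∧
      ∀ (x x' : Site), adj x x' → ∀ n : ℕ,
        μ {ω : Config | ω x' = false ∧
            (∃ s : Finset Site, ↑s ⊆ partialCluster ω x x' ∧ n ≤ s.card) ∧
            ∀ y ∈ partialCluster ω x x', ¬ IsProtected ω y}
          ≤ min (ENNReal.ofReal (K * Real.exp (-α * n)))
              (ENNReal.ofReal (K * (1 - (1 - p) ^ 4) ^ ((n : ℝ) / 4))) := by
  obtain ⟨hp0, hp1⟩ := hp
  set q : ℝ := 1 - (1 - p) ^ 4
  have hq0 : 0 < q := by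
    have := pow_lt_one₀ (sub_nonneg.2 hp1.le) (sub_lt_self 1 hp0) four_ne_zero
    linarith
  have hq1 : q < 1 := by
    have := pow_pos (sub_pos.2 hp1) 4
    linarith
  refine ⟨-Real.log q / 4, q ^ (-3 : ℝ), by linarith [Real.log_neg hq0 hq1], by positivity,
    fun x x' _ n => ?_⟩
  have hexp : Real.exp (-(-Real.log q / 4) * n) = q ^ ((n : ℝ) / 4) := by
    rw [Real.rpow_def_of_pos hq0]
    ring_nf
  have hpow : q ^ (n / 4 - 2) ≤ q ^ (-3 : ℝ) * q ^ ((n : ℝ) / 4) := by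
    rw [← Real.rpow_natCast, ← Real.rpow_add hq0]
    refine Real.rpow_le_rpow_of_exponent_ge hq0 hq1.le ?_
    have : (n : ℝ) ≤ 4 * ((n / 4 - 2 : ℕ) : ℝ) + 12 := by
      exact_mod_cast (by omega : n ≤ 4 * (n / 4 - 2) + 12)
    linarith
  rw [hexp, min_self]
  -- before each of the first `n / 4 - 2` steps fewer than `n` sites are explored
  calc μ _ ≤ μ (goodSteps x x' (n / 4 - 2)) :=
        measure_mono (noProtected_subset_goodSteps fun i hi => by omega)
    _ ≤ ENNReal.ofReal q ^ (n / 4 - 2) := measure_goodSteps_le x x' hp1.le hμ _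
    _ = ENNReal.ofReal (q ^ (n / 4 - 2)) := (ENNReal.ofReal_pow hq0.le _).symm
    _ ≤ ENNReal.ofReal (q ^ (-3 : ℝ) * q ^ ((n : ℝ) / 4)) := ENNReal.ofReal_le_ofReal hpow
end

section
/- For all n in [1,infinity], the percolation probabilities satisfy theta(p) <= theta(p,n) <= (1/p) theta(p) for p in (p_c^*, 1], where theta(p,n) is the probability that the origin belongs to an infinite open *-cluster at time n of the bootstrap dynamics and theta(p) is the corresponding probability at time 0. -/
open MeasureTheory Filter Set

/-- `x` belongs to an infinite cluster of `S` for the adjacency relation `A`. -/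
def InfClusterIn (S : Set Site) (A : Site → Site → Prop) (x : Site) : Prop :=
  x ∈ S ∧ {y | ConnIn S A x y}.Infinite

/-- The critical probability `p_c` of independent site percolation on `ℤ²`. -/
noncomputable def pc : ℝ :=
  sInf {p : ℝ | p ∈ Set.Icc (0 : ℝ) 1 ∧
    ∀ μ : Measure Config, IsProbabilityMeasure μ → IsBernoulli p μ →
      0 < μ {ω : Config | ∃ x : Site, InfClusterIn {z | ω z = true} adj x}}

/-!
Monotonicity of the dynamics gives `θ(p) ≤ θ(p,n) ≤ θ(p,∞)`. For the upper bound we show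
deterministically that if the origin lies in an infinite final `*`-cluster, then some
`*`-neighbour `w` of the origin lies in an infinite initially open `*`-cluster avoiding the
origin. This event does not involve the origin, so by independence `p` times its probability is
at most `θ(p)`.

For the deterministic claim, note that a site opened at time `t + 1` has three open neighbours
at time `t`, and all open sites `*`-adjacent to it are then connected at time `t`. Pulling paths
back step by step, the initially open sites of the final cluster lie in a single initial cluster.
That cluster is infinite because bootstrap never leaves the bounding box of a finite set of
initially open sites. Finally, a closed `3 × 3` block never opens, so the origin or one of its
`*`-neighbours is initially open.
-/

lemma adjStar_comm {x y : Site} : adjStar x y ↔ adjStar y x := by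
  simp only [adjStar, ne_eq, Prod.ext_iff]; omega

lemma mem_nbrs_iff {x y : Site} : y ∈ nbrs x ↔ adj x y := by
  obtain ⟨a, b⟩ := x; obtain ⟨c, d⟩ := y
  simp only [nbrs, adj, Finset.mem_insert, Finset.mem_singleton, Prod.mk.injEq]
  omega

lemma adjStar_of_mem_nbrs {x y : Site} (h : y ∈ nbrs x) : adjStar x y := by
  rw [mem_nbrs_iff, adj] at h
  simp only [adjStar, ne_eq, Prod.ext_iff]; omega

lemma exists_nbrs_adjStar {x y : Site} (h : adjStar x y) :
    ∃ a ∈ nbrs x, ∃ b ∈ nbrs x, a ≠ b ∧ adjStar a y ∧ adjStar b y := by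
  obtain ⟨x₁, x₂⟩ := x; obtain ⟨y₁, y₂⟩ := y
  simp only [mem_nbrs_iff, adj, adjStar, ne_eq, Prod.mk.injEq] at h ⊢
  by_cases h₁ : x₁ = y₁
  · refine ⟨(x₁ + 1, x₂), by simp, (x₁ - 1, x₂), ?_⟩
    simp; omega
  by_cases h₂ : x₂ = y₂
  · refine ⟨(x₁, x₂ + 1), by simp, (x₁, x₂ - 1), ?_⟩
    simp; omega
  refine ⟨(y₁, x₂), ?_, (x₁, y₂), ?_⟩ <;> simp <;> omega

lemma exists_nbrs_adjStar_of_not_adjStar {x a b : Site} (ha : a ∈ nbrs x) (hb : b ∈ nbrs x)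
    (hab : a ≠ b) (h : ¬adjStar a b) :
    ∃ c ∈ nbrs x, ∃ d ∈ nbrs x, c ≠ d ∧ adjStar c a ∧ adjStar c b ∧ adjStar d a ∧ adjStar d b := by
  obtain ⟨x₁, x₂⟩ := x; obtain ⟨a₁, a₂⟩ := a; obtain ⟨b₁, b₂⟩ := b
  simp only [mem_nbrs_iff, adj, adjStar, ne_eq, Prod.mk.injEq] at ha hb hab h ⊢
  by_cases h₁ : a₁ = x₁
  · refine ⟨(x₁ + 1, x₂), by simp, (x₁ - 1, x₂), by simp, ?_⟩
    simp; omega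
  · refine ⟨(x₁, x₂ + 1), by simp, (x₁, x₂ - 1), by simp, ?_⟩
    simp; omega

lemma card_filter_nbrs_mem_Icc_le_one {x lo hi : Site} (hx : x ∉ Finset.Icc lo hi) :
    ((nbrs x).filter (· ∈ Finset.Icc lo hi)).card ≤ 1 := by
  rw [Finset.card_le_one]
  obtain ⟨x₁, x₂⟩ := x
  simp only [Finset.mem_filter, Finset.mem_Icc, Prod.le_def] at hx ⊢
  simp only [nbrs, Finset.mem_insert, Finset.mem_singleton]
  rintro a ⟨ha | ha | ha | ha, ha'⟩ b ⟨hb | hb | hb | hb, hb'⟩ <;> subst a b <;>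
    simp only [Prod.mk.injEq] at * <;> omega

lemma two_le_card_filter_nbrs_mem_Icc {x lo hi : Site} (hx : x ∈ Finset.Icc lo hi)
    (h₁ : lo.1 < hi.1) (h₂ : lo.2 < hi.2) :
    2 ≤ ((nbrs x).filter (· ∈ Finset.Icc lo hi)).card := by
  obtain ⟨x₁, x₂⟩ := x
  simp only [Finset.mem_Icc, Prod.le_def] at hx
  rw [Nat.succ_le_iff, Finset.one_lt_card]
  refine ⟨if x₁ < hi.1 then (x₁ + 1, x₂) else (x₁ - 1, x₂), ?_,
    if x₂ < hi.2 then (x₁, x₂ + 1) else (x₁, x₂ - 1), ?_, ?_⟩ <;>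
    split_ifs <;> simp [nbrs, Prod.le_def] <;> omega

def starGraph (S : Set Site) : SimpleGraph Site where
  Adj a b := a ∈ S ∧ b ∈ S ∧ adjStar a b
  symm := ⟨fun _ _ ⟨ha, hb, h⟩ => ⟨hb, ha, adjStar_comm.1 h⟩⟩
  loopless := ⟨fun _ ⟨_, _, h, _⟩ => h rfl⟩

namespace starGraph

variable {S T : Set Site} {x y : Site}

lemma mono (hST : S ⊆ T) : starGraph S ≤ starGraph T :=
  fun _ _ hab => ⟨hST hab.1, hST hab.2.1, hab.2.2⟩

lemma reachable_of_adjStar (hx : x ∈ S) (hy : y ∈ S) (h : adjStar x y) :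
    (starGraph S).Reachable x y :=
  SimpleGraph.Adj.reachable ⟨hx, hy, h⟩

lemma eq_or_mem_of_reachable (h : (starGraph S).Reachable x y) : y = x ∨ y ∈ S := by
  obtain ⟨p⟩ := h
  induction p with
  | nil => exact .inl rfl
  | cons hadj _ ih => exact .inr (ih.elim (fun h => h ▸ hadj.2.1) id)

lemma reachable_diff_of_notMem_support {u v : Site} (p : (starGraph S).Walk u v)
    (hx : x ∉ p.support) : (starGraph (S \ {x})).Reachable u v := by
  induction p with
  | nil => rfl
  | cons hadj p ih =>
    simp only [SimpleGraph.Walk.support_cons, List.mem_cons, not_or] at hx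
    refine SimpleGraph.Reachable.trans (SimpleGraph.Adj.reachable ?_) (ih hx.2)
    exact ⟨⟨hadj.1, Ne.symm hx.1⟩, ⟨hadj.2.1, fun h => hx.2 (h ▸ p.start_mem_support)⟩, hadj.2.2⟩

lemma reachable_subset_insert_biUnion :
    {y | (starGraph S).Reachable x y} ⊆
      insert x (⋃ w ∈ {w | w ∈ S ∧ adjStar x w}, {y | (starGraph (S \ {x})).Reachable w y}) := by
  rintro y ⟨p⟩
  obtain ⟨q, hq⟩ := p.toPath
  cases q with
  | nil => exact Set.mem_insert _ _
  | cons hadj q =>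
    rw [SimpleGraph.Walk.cons_isPath_iff] at hq
    exact Set.mem_insert_of_mem _ (Set.mem_biUnion ⟨hadj.2.1, hadj.2.2⟩
      (reachable_diff_of_notMem_support q hq.2))

lemma connIn_iff : ConnIn S adjStar x y ↔ x ∈ S ∧ (starGraph S).Reachable x y := by
  constructor
  · rintro ⟨k, π, rfl, rfl, -, hadj, hmem⟩
    refine ⟨hmem 0, ?_⟩
    induction k with
    | zero => rfl
    | succ k ih =>
      refine (ih (fun i => π i.castSucc) (fun i => hadj i.castSucc) fun i => hmem _).trans ?_
      exact reachable_of_adjStar (hmem _) (hmem _) (hadj (Fin.last k))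
  · rintro ⟨hx, ⟨p⟩⟩
    obtain ⟨q, hq⟩ := p.toPath
    have hmem : ∀ i ≤ q.length, q.getVert i ∈ S := by
      rintro (_ | i) hi
      · simpa using hx
      · exact (q.adj_getVert_succ (Nat.lt_of_succ_le hi)).2.1
    refine ⟨q.length, fun i => q.getVert i, by simp, by simp, fun i j hij => ?_,
      fun i => (q.adj_getVert_succ i.isLt).2.2, fun i => hmem i (Nat.lt_succ_iff.1 i.isLt)⟩
    exact Fin.ext (hq.getVert_injOn (Nat.lt_succ_iff.1 i.isLt) (Nat.lt_succ_iff.1 j.isLt) hij)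

lemma infClusterIn_iff :
    InfClusterIn S adjStar x ↔ x ∈ S ∧ {y | (starGraph S).Reachable x y}.Infinite := by
  refine and_congr_right fun hx => ?_
  simp only [connIn_iff, hx, true_and]

end starGraph

open starGraph

lemma infClusterIn_mono {S T : Set Site} (hST : S ⊆ T) {A : Site → Site → Prop} {x : Site}
    (h : InfClusterIn S A x) : InfClusterIn T A x := by
  refine ⟨hST h.1, h.2.mono ?_⟩
  rintro y ⟨k, π, h₀, hₗ, hinj, hadj, hmem⟩
  exact ⟨k, π, h₀, hₗ, hinj, hadj, fun i => hST (hmem i)⟩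

lemma infClusterIn_of_adjStar {S : Set Site} {x w : Site} (hx : x ∈ S) (hxw : adjStar x w)
    (hw : InfClusterIn (S \ {x}) adjStar w) : InfClusterIn S adjStar x := by
  rw [infClusterIn_iff] at hw ⊢
  refine ⟨hx, hw.2.mono fun y hy => ?_⟩
  exact (reachable_of_adjStar hx hw.1.1 hxw).trans (hy.mono (mono Set.sdiff_subset))

lemma card_nbrs (x : Site) : (nbrs x).card = 4 := by
  obtain ⟨a, b⟩ := x
  simp only [nbrs]
  rw [Finset.card_insert_of_notMem (by simp; omega), Finset.card_insert_of_notMem (by simp),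
    Finset.card_pair (by simp; omega)]

lemma step_eq_true_iff {σ : Config} {x : Site} :
    step σ x = true ↔ σ x = true ∨ 3 ≤ ((nbrs x).filter fun y => σ y = true).card := by
  simp [step]

lemma evolve_mono (ω : Config) {m n : ℕ} (hmn : m ≤ n) {x : Site}
    (h : evolve ω m x = true) : evolve ω n x = true := by
  induction n, hmn using Nat.le_induction with
  | base => exact h
  | succ n _ ih => exact step_eq_true_iff.2 (.inl ih)

lemma eq_true_or_eq_true_of_three_le {σ : Config} {x a b : Site}
    (h3 : 3 ≤ ((nbrs x).filter fun y => σ y = true).card)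
    (ha : a ∈ nbrs x) (hb : b ∈ nbrs x) (hab : a ≠ b) : σ a = true ∨ σ b = true := by
  by_contra! h
  have hsub : {a, b} ⊆ (nbrs x).filter fun y => ¬σ y = true := by
    simp [Finset.insert_subset_iff, ha, hb, h.1, h.2]
  have := Finset.card_le_card hsub
  have := (nbrs x).card_filter_add_card_filter_not fun y => σ y = true
  rw [Finset.card_pair hab, card_nbrs] at *
  omega

lemma stableClosed_of_two_le_card_nbrs {ω : Config} (F : Finset Site)
    (hF : ∀ x ∈ F, 2 ≤ ((nbrs x).filter (· ∈ F)).card) (hω : ∀ x ∈ F, ω x = false) :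
    ∀ x ∈ F, stableClosed ω x := by
  suffices ∀ n, ∀ x ∈ F, evolve ω n x = false from fun x hx n => this n x hx
  intro n
  induction n with
  | zero => exact hω
  | succ n ih =>
    intro x hx
    have hsub : ((nbrs x).filter fun y => evolve ω n y = true) ⊆ (nbrs x).filter (· ∉ F) :=
      Finset.monotone_filter_right _ fun y _ hy hyF => by simp [ih y hyF] at hy
    have := Finset.card_le_card hsub
    have := (nbrs x).card_filter_add_card_filter_not (· ∈ F)
    have := hF x hx
    rw [card_nbrs] at *
    simp only [evolve, step, ih x hx, Bool.false_or, decide_eq_false_iff_not]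
    omega

lemma exists_open_of_finalOpen {ω : Config} {x : Site} (hx : finalOpen ω x) :
    ∃ c, ω c = true ∧ (c = x ∨ adjStar x c) := by
  by_contra! h
  set F := Finset.Icc (x.1 - 1, x.2 - 1) (x.1 + 1, x.2 + 1)
  have hclosed : ∀ z ∈ F, ω z = false := by
    intro z hz
    have : z = x ∨ adjStar x z := by
      obtain ⟨z₁, z₂⟩ := z
      simp only [F, Finset.mem_Icc, Prod.le_def] at hz
      simp only [adjStar, ne_eq, Prod.ext_iff]
      omega
    simpa using mt (h z) (by tauto)
  obtain ⟨n, hn⟩ := hx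
  have := stableClosed_of_two_le_card_nbrs F
    (fun z hz => two_le_card_filter_nbrs_mem_Icc hz (by simp) (by simp)) hclosed x
    (by simp [F, Prod.le_def]) n
  simp [hn] at this

lemma reachable_of_three_le {σ : Config} {x a b : Site}
    (h3 : 3 ≤ ((nbrs x).filter fun y => σ y = true).card)
    (ha : σ a = true) (hb : σ b = true) (hax : adjStar x a) (hbx : adjStar x b) :
    (starGraph {z | σ z = true}).Reachable a b := by
  have to_nbr : ∀ a, σ a = true → adjStar x a →
      ∃ n ∈ nbrs x, σ n = true ∧ (starGraph {z | σ z = true}).Reachable a n := by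
    intro a ha hax
    obtain ⟨n₁, hn₁, n₂, hn₂, hne, h₁, h₂⟩ := exists_nbrs_adjStar hax
    rcases eq_true_or_eq_true_of_three_le h3 hn₁ hn₂ hne with h | h
    · exact ⟨n₁, hn₁, h, reachable_of_adjStar ha h (adjStar_comm.1 h₁)⟩
    · exact ⟨n₂, hn₂, h, reachable_of_adjStar ha h (adjStar_comm.1 h₂)⟩
  have nbrs_conn : ∀ n ∈ nbrs x, ∀ n' ∈ nbrs x, σ n = true → σ n' = true →
      (starGraph {z | σ z = true}).Reachable n n' := by
    intro n hn n' hn' h h'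
    by_cases heq : n = n'
    · exact heq ▸ .rfl
    by_cases hadj : adjStar n n'
    · exact reachable_of_adjStar h h' hadj
    -- `n` and `n'` are opposite, and one of the two other neighbours is open
    obtain ⟨m₁, hm₁, m₂, hm₂, hne, h₁, h₁', h₂, h₂'⟩ :=
      exists_nbrs_adjStar_of_not_adjStar hn hn' heq hadj
    rcases eq_true_or_eq_true_of_three_le h3 hm₁ hm₂ hne with hm | hm
    · exact (reachable_of_adjStar hm h h₁).symm.trans (reachable_of_adjStar hm h' h₁')
    · exact (reachable_of_adjStar hm h h₂).symm.trans (reachable_of_adjStar hm h' h₂')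
  obtain ⟨n, hn, hσn, hrn⟩ := to_nbr a ha hax
  obtain ⟨n', hn', hσn', hrn'⟩ := to_nbr b hb hbx
  exact hrn.trans ((nbrs_conn n hn n' hn' hσn hσn').trans hrn'.symm)

/-- The sites open before one step that account for `x` being open after it. -/
def anchors (σ : Config) (x : Site) : Set Site :=
  {a | σ a = true ∧ (a = x ∨ σ x = false ∧ adjStar x a)}

lemma anchors_of_eq_true {σ : Config} {x : Site} (hx : σ x = true) : anchors σ x = {x} := by
  ext a
  simp only [anchors, hx, Bool.true_eq_false, false_and, or_false, Set.mem_ofPred_eq,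
    Set.mem_singleton_iff, and_iff_right_iff_imp]
  exact fun h => h ▸ hx

lemma mem_anchors_of_adjStar {σ : Config} {x a : Site} (hx : σ x = false) (ha : σ a = true)
    (hxa : adjStar x a) : a ∈ anchors σ x :=
  ⟨ha, .inr ⟨hx, hxa⟩⟩

lemma reachable_of_mem_anchors {σ : Config} {x a b : Site} (hx : step σ x = true)
    (ha : a ∈ anchors σ x) (hb : b ∈ anchors σ x) :
    (starGraph {z | σ z = true}).Reachable a b := by
  rcases Bool.eq_false_or_eq_true (σ x) with hσ | hσ
  · rw [anchors_of_eq_true hσ] at ha hb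
    rw [ha, hb]
  obtain ⟨ha, rfl | ⟨-, hax⟩⟩ := ha
  · simp [ha] at hσ
  obtain ⟨hb, rfl | ⟨-, hbx⟩⟩ := hb
  · simp [hb] at hσ
  exact reachable_of_three_le ((step_eq_true_iff.1 hx).resolve_left (by simp [hσ])) ha hb hax hbx

lemma exists_reachable_anchors {σ : Config} {x y : Site} (hx : step σ x = true)
    (hxy : adjStar x y) :
    ∃ a ∈ anchors σ x, ∃ b ∈ anchors σ y, (starGraph {z | σ z = true}).Reachable a b := by
  rcases Bool.eq_false_or_eq_true (σ x) with hσx | hσx <;>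
    rcases Bool.eq_false_or_eq_true (σ y) with hσy | hσy
  · exact ⟨x, by simp [anchors_of_eq_true hσx], y, by simp [anchors_of_eq_true hσy],
      reachable_of_adjStar hσx hσy hxy⟩
  · exact ⟨x, by simp [anchors_of_eq_true hσx], x,
      mem_anchors_of_adjStar hσy hσx (adjStar_comm.1 hxy), .rfl⟩
  · exact ⟨y, mem_anchors_of_adjStar hσx hσy hxy, y, by simp [anchors_of_eq_true hσy], .rfl⟩
  -- both sites are newly opened: two neighbours of `x` are `*`-adjacent to `y`, one is open
  obtain ⟨n₁, hn₁, n₂, hn₂, hne, h₁, h₂⟩ := exists_nbrs_adjStar hxy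
  have h3 := (step_eq_true_iff.1 hx).resolve_left (by simp [hσx])
  obtain ⟨n, hn, hσn, hny⟩ : ∃ n ∈ nbrs x, σ n = true ∧ adjStar n y := by
    rcases eq_true_or_eq_true_of_three_le h3 hn₁ hn₂ hne with h | h
    exacts [⟨n₁, hn₁, h, h₁⟩, ⟨n₂, hn₂, h, h₂⟩]
  exact ⟨n, mem_anchors_of_adjStar hσx hσn (adjStar_of_mem_nbrs hn), n,
    mem_anchors_of_adjStar hσy hσn (adjStar_comm.1 hny), .rfl⟩

lemma reachable_anchors_of_reachable_step {σ : Config} {x y : Site} (hx : step σ x = true)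
    (h : (starGraph {z | step σ z = true}).Reachable x y) :
    ∀ a ∈ anchors σ x, ∀ b ∈ anchors σ y, (starGraph {z | σ z = true}).Reachable a b := by
  obtain ⟨p⟩ := h
  induction p with
  | nil => exact fun a ha b hb => reachable_of_mem_anchors hx ha hb
  | cons hadj _ ih =>
    intro a ha b hb
    obtain ⟨a', ha', c, hc, hac⟩ := exists_reachable_anchors hadj.1 hadj.2.2
    exact (reachable_of_mem_anchors hx ha ha').trans (hac.trans (ih hadj.2.1 c hc b hb))

lemma reachable_of_reachable_evolve {ω : Config} {a b : Site} (ha : ω a = true)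
    (hb : ω b = true) {n : ℕ} (h : (starGraph {z | evolve ω n z = true}).Reachable a b) :
    (starGraph {z | ω z = true}).Reachable a b := by
  induction n with
  | zero => exact h
  | succ n ih =>
    have ha' := evolve_mono ω (Nat.zero_le n) ha
    have hb' := evolve_mono ω (Nat.zero_le n) hb
    refine ih (reachable_anchors_of_reachable_step (step_eq_true_iff.2 (.inl ha')) h a ?_ b ?_)
    · simp [anchors_of_eq_true ha']
    · simp [anchors_of_eq_true hb']

lemma exists_reachable_evolve {ω : Config} {a b : Site}
    (h : (starGraph {z | finalOpen ω z}).Reachable a b) :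
    ∃ n, (starGraph {z | evolve ω n z = true}).Reachable a b := by
  obtain ⟨p⟩ := h
  induction p with
  | nil => exact ⟨0, .rfl⟩
  | cons hadj _ ih =>
    obtain ⟨⟨i, hi⟩, ⟨j, hj⟩, hadj⟩ := hadj
    obtain ⟨n, hn⟩ := ih
    refine ⟨max n (max i j), .trans (reachable_of_adjStar ?_ ?_ hadj) (hn.mono (mono ?_))⟩
    · exact evolve_mono ω (by omega) hi
    · exact evolve_mono ω (by omega) hj
    · exact fun z hz => evolve_mono ω (by omega) hz

/-- A site outside a box has at most one neighbour in it, so bootstrap never leaves the bounding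
box of the initially open sites of a final cluster. -/
lemma finite_of_finite_setOf_reachable_and_open {ω : Config} {x : Site}
    (h : {u | (starGraph {z | finalOpen ω z}).Reachable x u ∧ ω u = true}.Finite) :
    {u | (starGraph {z | finalOpen ω z}).Reachable x u}.Finite := by
  obtain ⟨lo, hlo⟩ := h.bddBelow
  obtain ⟨hi, hhi⟩ := h.bddAbove
  have hbox : ∀ n u, (starGraph {z | finalOpen ω z}).Reachable x u → evolve ω n u = true →
      u ∈ Finset.Icc lo hi := by
    intro n
    induction n with
    | zero => exact fun u hu h₀ => Finset.mem_Icc.2 ⟨hlo ⟨hu, h₀⟩, hhi ⟨hu, h₀⟩⟩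
    | succ n ih =>
      intro u hu hn
      by_cases hu₀ : evolve ω n u = true
      · exact ih u hu hu₀
      have h3 : 3 ≤ ((nbrs u).filter fun y => evolve ω n y = true).card :=
        (step_eq_true_iff.1 hn).resolve_left hu₀
      have hsub : ((nbrs u).filter fun y => evolve ω n y = true) ⊆
          (nbrs u).filter (· ∈ Finset.Icc lo hi) :=
        Finset.monotone_filter_right _ fun w hw hwn => ih w
          (hu.trans (reachable_of_adjStar ⟨n + 1, hn⟩ ⟨n, hwn⟩ (adjStar_of_mem_nbrs hw))) hwn
      by_contra hout
      have := Finset.card_le_card hsub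
      have := card_filter_nbrs_mem_Icc_le_one hout
      omega
  refine ((Finset.Icc lo hi).finite_toSet.insert x).subset fun u hu => ?_
  rcases eq_or_mem_of_reachable hu with rfl | ⟨n, hn⟩
  · exact Set.mem_insert _ _
  · exact Set.mem_insert_of_mem _ (hbox n u hu hn)

lemma exists_adjStar_infClusterIn_of_finalOpen {ω : Config} {x : Site}
    (h : InfClusterIn {z | finalOpen ω z} adjStar x) :
    ∃ w, adjStar x w ∧ InfClusterIn ({z | ω z = true} \ {x}) adjStar w := by
  obtain ⟨hx, hK⟩ := infClusterIn_iff.1 h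
  obtain ⟨c, hc, hcx⟩ := exists_open_of_finalOpen hx
  set T := insert x {z | ω z = true}
  have hxc : (starGraph T).Reachable x c := by
    rcases hcx with rfl | hcx
    exacts [.rfl, reachable_of_adjStar (Set.mem_insert _ _) (Set.mem_insert_of_mem _ hc) hcx]
  have hxc' : (starGraph {z | finalOpen ω z}).Reachable x c := by
    rcases hcx with rfl | hcx
    exacts [.rfl, reachable_of_adjStar hx ⟨0, hc⟩ hcx]
  have hsub : {u | (starGraph {z | finalOpen ω z}).Reachable x u ∧ ω u = true} ⊆
      {u | (starGraph T).Reachable x u} := by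
    rintro u ⟨hu, hu₀⟩
    obtain ⟨n, hn⟩ := exists_reachable_evolve (hxc'.symm.trans hu)
    exact hxc.trans ((reachable_of_reachable_evolve hc hu₀ hn).mono (mono (Set.subset_insert _ _)))
  have hC : {u | (starGraph T).Reachable x u}.Infinite :=
    fun hfin => hK (finite_of_finite_setOf_reachable_and_open (hfin.subset hsub))
  have hfin : {w | w ∈ T ∧ adjStar x w}.Finite := by
    refine (Set.finite_Icc (x.1 - 1, x.2 - 1) (x.1 + 1, x.2 + 1)).subset ?_
    rintro ⟨w₁, w₂⟩ ⟨-, hw⟩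
    simp only [adjStar, ne_eq, Prod.ext_iff] at hw
    simp only [Set.mem_Icc, Prod.le_def]
    omega
  obtain ⟨w, ⟨hwT, hxw⟩, hw⟩ : ∃ w ∈ {w | w ∈ T ∧ adjStar x w},
      {y | (starGraph (T \ {x})).Reachable w y}.Infinite := by
    by_contra! hcon
    exact hC (((hfin.biUnion hcon).insert x).subset reachable_subset_insert_biUnion)
  rw [Set.insert_sdiff_of_mem _ (Set.mem_singleton x)] at hw
  have hw₀ : ω w = true := hwT.resolve_left hxw.1.symm
  exact ⟨w, hxw, infClusterIn_iff.2 ⟨⟨hw₀, hxw.1.symm⟩, hw⟩⟩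

lemma measurableSet_setOf_infinite {α β : Type*} [MeasurableSpace α] [Countable β]
    {P : α → β → Prop} (hP : ∀ y, MeasurableSet {x | P x y}) :
    MeasurableSet {x | {y | P x y}.Infinite} := by
  have : {x | {y | P x y}.Infinite} = ⋂ t : Finset β, ⋃ y ∈ (↑t : Set β)ᶜ, {x | P x y} := by
    ext x
    simp only [Set.mem_ofPred_eq, Set.mem_iInter, Set.mem_iUnion, Set.mem_compl_iff,
      Finset.mem_coe, exists_prop]
    refine ⟨fun h t => ?_, fun h hfin => ?_⟩
    · obtain ⟨y, hy, hyt⟩ := h.exists_notMem_finset t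
      exact ⟨y, hyt, hy⟩
    · obtain ⟨y, hy, hyP⟩ := h hfin.toFinset
      exact hy (hfin.mem_toFinset.2 hyP)
  rw [this]
  exact .iInter fun t => .biUnion (Set.to_countable _) fun y _ => hP y

lemma measurableSet_infClusterIn {m : MeasurableSpace Config} {D : Set Site}
    (hD : ∀ z ∉ D, MeasurableSet[m] {ω : Config | ω z = true}) (A : Site → Site → Prop)
    (x : Site) : MeasurableSet[m] {ω : Config | InfClusterIn ({z | ω z = true} \ D) A x} := by
  have hsite : ∀ z, MeasurableSet[m] {ω : Config | z ∈ {z | ω z = true} \ D} := fun z => by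
    by_cases hz : z ∈ D
    · simp [hz]
    · simpa [hz] using hD z hz
  refine (hsite x).inter (measurableSet_setOf_infinite fun y => ?_)
  simp only [ConnIn, IsPathIn, Set.ofPred_exists, Set.ofPred_and, Set.ofPred_forall]
  exact .iUnion fun k => .iUnion fun π =>
    (MeasurableSet.const _).inter <| (MeasurableSet.const _).inter <|
      (MeasurableSet.const _).inter <| (MeasurableSet.iInter fun _ => .const _).inter <|
        .iInter fun _ => hsite _

def cylindersAvoiding (x : Site) : Set (Set Config) :=
  {B | ∃ (s : Finset Site) (η : Site → Bool), x ∉ s ∧ B = {ω | ∀ y ∈ s, ω y = η y}}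

lemma isPiSystem_cylindersAvoiding (x : Site) : IsPiSystem (cylindersAvoiding x) := by
  rintro _ ⟨s, η, hs, rfl⟩ _ ⟨t, θ, ht, rfl⟩ ⟨ω₀, hω₀s, hω₀t⟩
  -- a common point `ω₀` serves as the prescribed values on `s ∪ t`
  refine ⟨s ∪ t, ω₀, by simp [hs, ht], ?_⟩
  ext ω
  simp only [Set.mem_inter_iff, Set.mem_ofPred_eq, Finset.mem_union] at hω₀s hω₀t ⊢
  refine ⟨fun ⟨h, h'⟩ y hy => hy.elim (fun hy => (h y hy).trans (hω₀s y hy).symm)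
    (fun hy => (h' y hy).trans (hω₀t y hy).symm), fun h => ⟨fun y hy => ?_, fun y hy => ?_⟩⟩
  · exact (h y (.inl hy)).trans (hω₀s y hy)
  · exact (h y (.inr hy)).trans (hω₀t y hy)

lemma measurableSet_cylinder (s : Finset Site) (η : Site → Bool) :
    MeasurableSet {ω : Config | ∀ y ∈ s, ω y = η y} := by
  simp only [Set.ofPred_forall]
  exact .iInter fun y => .iInter fun _ =>
    measurableSet_eq_fun (measurable_pi_apply y) measurable_const

lemma generateFrom_cylindersAvoiding_le (x : Site) :
    MeasurableSpace.generateFrom (cylindersAvoiding x) ≤ MeasurableSpace.pi :=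
  MeasurableSpace.generateFrom_le fun _ ⟨s, η, _, hB⟩ => hB ▸ measurableSet_cylinder s η

lemma measurableSet_eq_true_of_ne {x z : Site} (hz : z ≠ x) :
    MeasurableSet[MeasurableSpace.generateFrom (cylindersAvoiding x)] {ω : Config | ω z = true} :=
  MeasurableSpace.measurableSet_generateFrom ⟨{z}, fun _ => true, by simpa using hz.symm, by simp⟩

lemma IsBernoulli.measure_inter_eq_mul {p : ℝ} {μ : Measure Config} [IsProbabilityMeasure μ]
    (hμ : IsBernoulli p μ) {x : Site} {B : Set Config}
    (hB : MeasurableSet[MeasurableSpace.generateFrom (cylindersAvoiding x)] B) :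
    μ ({ω | ω x = true} ∩ B) = ENNReal.ofReal p * μ B := by
  have hE : MeasurableSet {ω : Config | ω x = true} :=
    measurableSet_eq_fun (measurable_pi_apply x) measurable_const
  have hμE : μ {ω | ω x = true} = ENNReal.ofReal p := by simpa using hμ {x} fun _ => true
  rw [Set.inter_comm, ← Measure.restrict_apply' hE, ← smul_eq_mul, ← Measure.smul_apply]
  refine ext_on_measurableSpace_of_generate_finite _ _ ?_ (generateFrom_cylindersAvoiding_le x)
    rfl (isPiSystem_cylindersAvoiding x) ?_ hB
  · rintro _ ⟨s, η, hx, rfl⟩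
    have hcyl : {ω : Config | ∀ y ∈ s, ω y = η y} ∩ {ω | ω x = true} =
        {ω | ∀ y ∈ insert x s, ω y = Function.update η x true y} := by
      ext ω
      simp only [Set.mem_inter_iff, Set.mem_ofPred_eq, Finset.forall_mem_insert,
        Function.update_self]
      refine ⟨fun ⟨h, hx'⟩ => ⟨hx', fun y hy => ?_⟩, fun ⟨hx', h⟩ => ⟨fun y hy => ?_, hx'⟩⟩
      · rw [Function.update_of_ne (ne_of_mem_of_not_mem hy hx)]; exact h y hy
      · rw [← Function.update_of_ne (ne_of_mem_of_not_mem hy hx) true η]; exact h y hy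
    rw [Measure.restrict_apply (measurableSet_cylinder s η), hcyl, hμ, Measure.smul_apply,
      smul_eq_mul, hμ, Finset.prod_insert hx, Function.update_self, if_pos rfl]
    congr 1
    exact Finset.prod_congr rfl fun y hy => by
      rw [Function.update_of_ne (ne_of_mem_of_not_mem hy hx)]
  · simp [hμE]

lemma pc_le_one : pc ≤ 1 := by
  suffices ∀ S : Set ℝ, S ⊆ Set.Icc 0 1 → sInf S ≤ 1 from this _ fun _ hp => hp.1
  intro S hS
  rcases S.eq_empty_or_nonempty with rfl | ⟨q, hq⟩
  · simp
  · exact (csInf_le ⟨0, fun _ h => (hS h).1⟩ hq).trans (hS hq).2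

lemma IsBernoulli.measure_infClusterIn_finalOpen_le {p : ℝ} {μ : Measure Config}
    [IsProbabilityMeasure μ] (hμ : IsBernoulli p μ) (hp : 0 < p) (x : Site) :
    μ {ω | InfClusterIn {z | finalOpen ω z} adjStar x} ≤
      ENNReal.ofReal (1 / p) * μ {ω | InfClusterIn {z | ω z = true} adjStar x} := by
  set A := {ω : Config | ∃ w, adjStar x w ∧ InfClusterIn ({z | ω z = true} \ {x}) adjStar w}
  have hA : MeasurableSet[MeasurableSpace.generateFrom (cylindersAvoiding x)] A := by
    simp only [A, Set.ofPred_exists, Set.ofPred_and]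
    exact .iUnion fun w => (MeasurableSet.const _).inter
      (measurableSet_infClusterIn (fun _ hz => measurableSet_eq_true_of_ne hz) _ _)
  calc μ {ω | InfClusterIn {z | finalOpen ω z} adjStar x}
      ≤ μ A := measure_mono fun ω => exists_adjStar_infClusterIn_of_finalOpen
    _ = ENNReal.ofReal (1 / p) * (ENNReal.ofReal p * μ A) := by
      rw [← mul_assoc, ← ENNReal.ofReal_mul (by positivity), one_div_mul_cancel hp.ne',
        ENNReal.ofReal_one, one_mul]
    _ = ENNReal.ofReal (1 / p) * μ ({ω | ω x = true} ∩ A) := by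
      rw [hμ.measure_inter_eq_mul hA]
    _ ≤ ENNReal.ofReal (1 / p) * μ {ω | InfClusterIn {z | ω z = true} adjStar x} := by
      gcongr
      rintro ω ⟨hx, w, hxw, hw⟩
      exact infClusterIn_of_adjStar hx hxw hw

theorem theta_sandwich_general (p : ℝ) (hp : 1 - pc < p)
    (μ : Measure Config) [IsProbabilityMeasure μ] (hμ : IsBernoulli p μ) :
    (∀ n : ℕ, 1 ≤ n →
      μ {ω : Config | InfClusterIn {z | ω z = true} adjStar (0, 0)}
        ≤ μ {ω : Config | InfClusterIn {z | evolve ω n z = true} adjStar (0, 0)}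
      ∧ μ {ω : Config | InfClusterIn {z | evolve ω n z = true} adjStar (0, 0)}
        ≤ ENNReal.ofReal (1 / p)
            * μ {ω : Config | InfClusterIn {z | ω z = true} adjStar (0, 0)})
    ∧ (μ {ω : Config | InfClusterIn {z | ω z = true} adjStar (0, 0)}
        ≤ μ {ω : Config | InfClusterIn {z | finalOpen ω z} adjStar (0, 0)}
      ∧ μ {ω : Config | InfClusterIn {z | finalOpen ω z} adjStar (0, 0)}
        ≤ ENNReal.ofReal (1 / p)
            * μ {ω : Config | InfClusterIn {z | ω z = true} adjStar (0, 0)}) := by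
  have hfinal := hμ.measure_infClusterIn_finalOpen_le (by linarith [pc_le_one]) (0, 0)
  have initial_le_evolve (ω : Config) (n : ℕ) :
      {z | ω z = true} ⊆ {z | evolve ω n z = true} := fun _ => evolve_mono ω n.zero_le
  have evolve_le_final (ω : Config) (n : ℕ) :
      {z | evolve ω n z = true} ⊆ {z | finalOpen ω z} := fun _ h => ⟨n, h⟩
  refine ⟨fun n _ => ⟨?_, le_trans ?_ hfinal⟩, ?_, hfinal⟩ <;>
    refine measure_mono fun ω => infClusterIn_mono ?_
  exacts [initial_le_evolve ω n, evolve_le_final ω n, evolve_le_final ω 0]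

/-- For `p ∈ (p_c^*, 1]` and every `n ∈ [1,∞]`, the percolation probabilities
(of the origin belonging to an infinite open `*`-cluster at time `n`) satisfy
`θ(p) ≤ θ(p,n) ≤ (1/p) θ(p)`. -/
theorem theta_sandwich (p : ℝ) (hp : 1 - pc < p) (hp1 : p ≤ 1)
    (μ : Measure Config) [IsProbabilityMeasure μ] (hμ : IsBernoulli p μ) :
    (∀ n : ℕ, 1 ≤ n →
      μ {ω : Config | InfClusterIn {z | ω z = true} adjStar (0, 0)}
        ≤ μ {ω : Config | InfClusterIn {z | evolve ω n z = true} adjStar (0, 0)}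
      ∧ μ {ω : Config | InfClusterIn {z | evolve ω n z = true} adjStar (0, 0)}
        ≤ ENNReal.ofReal (1 / p)
            * μ {ω : Config | InfClusterIn {z | ω z = true} adjStar (0, 0)})
    ∧ (μ {ω : Config | InfClusterIn {z | ω z = true} adjStar (0, 0)}
        ≤ μ {ω : Config | InfClusterIn {z | finalOpen ω z} adjStar (0, 0)}
      ∧ μ {ω : Config | InfClusterIn {z | finalOpen ω z} adjStar (0, 0)}
        ≤ ENNReal.ofReal (1 / p)
            * μ {ω : Config | InfClusterIn {z | ω z = true} adjStar (0, 0)}) :=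
  theta_sandwich_general p hp μ hμ
end
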